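/- Let u be a concave, law-determined monetary utility function on L^∞ of an atomless probability space, with the Fatou property and the CxLS property, not equal to the essential infimum, and let K be defined as below. For k ∈ (K,0) and a > 0, the set C(k,a) := {α ∈ [0,1] : u(α δ_k + (1−α) δ_a) ≥ 0} is a closed interval containing 0; its maximum α(k,a) satisfies 0 < α(k,a) < 1, α(k,a) is nondecreasing in k and in a, and u(α(k,a) δ_k + (1−α(k,a)) δ_a) = 0. -/

import Mathlib

open MeasureTheory Filter Set

/-- A (representative of an) element of `L^∞`: a measurable, essentially bounded function. -/
def BddMeas {Ω : Type} [MeasurableSpace Ω] (P : Measure Ω) (ξ : Ω → ℝ) : Prop :=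
  Measurable ξ ∧ ∃ C : ℝ, ∀ᵐ ω ∂P, |ξ ω| ≤ C

/-- `ξ` has the two-point law `l·δ_x + (1-l)·δ_y`. -/
def HasDyadicLaw {Ω : Type} [MeasurableSpace Ω] (P : Measure Ω) (ξ : Ω → ℝ)
    (x y l : ℝ) : Prop :=
  P.map ξ = ENNReal.ofReal l • Measure.dirac x + ENNReal.ofReal (1 - l) • Measure.dirac y

/-- Convex level sets at the level of distributions: if `u ξ = u η`, `l ∈ (0,1)` and `ζ` has
law `l·Law(ξ) + (1-l)·Law(η)`, then `u ζ = u ξ`. -/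
def CxLS {Ω : Type} [MeasurableSpace Ω] (P : Measure Ω) (u : (Ω → ℝ) → ℝ) : Prop :=
  ∀ ξ η ζ : Ω → ℝ, BddMeas P ξ → BddMeas P η → BddMeas P ζ → u ξ = u η →
    ∀ l : ℝ, 0 < l → l < 1 →
      P.map ζ = ENNReal.ofReal l • P.map ξ + ENNReal.ofReal (1 - l) • P.map η →
      u ζ = u ξ

/-- The essential infimum of `ξ` with respect to `P`. -/
noncomputable def essInfR {Ω : Type} [MeasurableSpace Ω] (P : Measure Ω) (ξ : Ω → ℝ) : ℝ :=
  sSup {c : ℝ | ∀ᵐ ω ∂P, c ≤ ξ ω}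

/-- `u(α δ_k + (1-α) δ_a) ≥ 0` (at the level of distributions). -/
def DyadicGE {Ω : Type} [MeasurableSpace Ω] (P : Measure Ω) (u : (Ω → ℝ) → ℝ)
    (k a α : ℝ) : Prop :=
  ∃ ξ : Ω → ℝ, BddMeas P ξ ∧ HasDyadicLaw P ξ k a α ∧ 0 ≤ u ξ

/-- The set `{k < 0 : for all a > 0 there is α ∈ (0,1) with u(α δ_k + (1-α) δ_a) ≥ 0}`. -/
def Sset {Ω : Type} [MeasurableSpace Ω] (P : Measure Ω) (u : (Ω → ℝ) → ℝ) : Set ℝ :=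
  {k | k < 0 ∧ ∀ a : ℝ, 0 < a → ∃ α : ℝ, 0 < α ∧ α < 1 ∧ DyadicGE P u k a α}

/-- `K := inf Sset ∈ [-∞, 0)`, as an extended real number. -/
noncomputable def Kdef {Ω : Type} [MeasurableSpace Ω] (P : Measure Ω)
    (u : (Ω → ℝ) → ℝ) : EReal :=
  sInf ((fun k : ℝ => (k : EReal)) '' Sset P u)

/-- `C(k,a) := {α ∈ [0,1] : u(α δ_k + (1-α) δ_a) ≥ 0}`. -/
def Cset {Ω : Type} [MeasurableSpace Ω] (P : Measure Ω) (u : (Ω → ℝ) → ℝ)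
    (k a : ℝ) : Set ℝ :=
  {α | 0 ≤ α ∧ α ≤ 1 ∧ DyadicGE P u k a α}

/-- `α(k,a) := max C(k,a)` (as a supremum). -/
noncomputable def alphaMax {Ω : Type} [MeasurableSpace Ω] (P : Measure Ω)
    (u : (Ω → ℝ) → ℝ) (k a : ℝ) : ℝ :=
  sSup (Cset P u k a)

/-- The function `φ` built from `u` with reference point `k₀`:
`φ(k) = 1 - 1/α(k,1)` for `k < 0`, `φ(0) = 0`, and
`φ(a) = φ(k₀)·(1 + 1/(α(k₀,a) - 1))` for `a > 0`. -/
noncomputable def phi {Ω : Type} [MeasurableSpace Ω] (P : Measure Ω)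
    (u : (Ω → ℝ) → ℝ) (k₀ : ℝ) (x : ℝ) : ℝ :=
  if x < 0 then 1 - 1 / alphaMax P u x 1
  else if x = 0 then 0
  else (1 - 1 / alphaMax P u k₀ 1) * (1 + 1 / (alphaMax P u k₀ x - 1))

/-!
Everything reduces to two-point variables `twoPoint A k a` (equal to `k` on `A` and to `a` off
it): by law invariance, `u(α δ_k + (1 - α) δ_a)` is `u (twoPoint A k a)` for any `A` with
`P A = α`, and on an atomless space (Sierpiński) such sets exist inside any set of larger measure.
Monotonicity of `u` then makes `C(k,a)` a down-set in `α` that grows with `k` and `a`; the Fatou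
property along sets `B_n ⊆ U` with `P B_n ↑ P U = α(k,a)` shows that the supremum is attained;
`1 ∉ C(k,a)` since `u(δ_k) = k < 0`, and `α(k,a) > 0` comes from some `k' < k` in the set
defining `K`.

If `c := u(α δ_k + (1 - α) δ_a) > 0` at `α = α(k,a)`, shifting by `c` gives level `0`, and CxLS
lets us mix in an atom at `0`: each mixture `ζ_i` still has `u ζ_i = 0`. Putting the atom of
`ζ_i` on the `i`-th of `n` disjoint pieces of a set `V` and averaging (concavity) yields a
two-point variable with values `(1 - 1/n)(k - c) ≤ k` on `V` and `a - c` off `V`; hence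
`P V ∈ C(k,a)`, although `P V > α(k,a)`.
-/

open Function
open scoped ENNReal Topology

/-- These weights make `l • (m • δ_x + (1 - m) • δ_y) + (1 - l) • δ_0` equal to
`e • δ_0 + ((N - 1) * e) • δ_x + (1 - N * e) • δ_y`: the law of a variable that is `0` on one of
`N` disjoint sets of measure `e`, `x` on the others and `y` off their union. -/
theorem exists_mixture_weights {m N : ℝ} (hm0 : 0 < m) (hm1 : m < 1) (hN : 1 < N) :
    ∃ l e : ℝ, 0 < l ∧ l < 1 ∧ 0 ≤ e ∧ 1 - l = e ∧ N * e - e = l * m ∧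
      1 - N * e = l * (1 - m) ∧ m < N * e ∧ N * e ≤ 1 := by
  have hden : 0 < N - 1 + m := by linarith
  refine ⟨(N - 1) / (N - 1 + m), m / (N - 1 + m), div_pos (by linarith) hden,
    (div_lt_one hden).2 (by linarith), by positivity, ?_, ?_, ?_, ?_, ?_⟩
  · field_simp; ring
  · field_simp
  · field_simp; ring
  · rw [mul_div_assoc', lt_div_iff₀ hden]; nlinarith
  · rw [mul_div_assoc', div_le_one hden]; nlinarith

theorem exists_superset_mem_forall_le_add {ι : Type*} {f : Set ι → ℝ≥0∞} {𝒢 : Set (Set ι)}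
    {t : ℝ≥0∞} (ht : t ≠ ∞) (hf : ∀ B ∈ 𝒢, f B ≤ t) {B : Set ι} (hB : B ∈ 𝒢) {ε : ℝ≥0∞}
    (hε : ε ≠ 0) : ∃ B' ∈ 𝒢, B ⊆ B' ∧ ∀ B'' ∈ 𝒢, B ⊆ B'' → f B'' ≤ f B' + ε := by
  set s := ⨆ (B' : Set ι) (_ : B' ∈ 𝒢 ∧ B ⊆ B'), f B'
  have hle : ∀ B'' ∈ 𝒢, B ⊆ B'' → f B'' ≤ s := fun B'' h𝒢 hB'' =>
    le_iSup₂_of_le B'' ⟨h𝒢, hB''⟩ le_rfl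
  by_cases hsmall : s ≤ ε
  · exact ⟨B, hB, subset_rfl, fun B'' h𝒢 hB'' =>
      (hle B'' h𝒢 hB'').trans (hsmall.trans le_add_self)⟩
  have hs_ne_top : s ≠ ∞ := ne_top_of_le_ne_top ht (iSup₂_le fun B' h => hf B' h.1)
  obtain ⟨B', ⟨hB'𝒢, hBB'⟩, hlt⟩ : ∃ B', (B' ∈ 𝒢 ∧ B ⊆ B') ∧ s - ε < f B' := by
    simpa only [s, lt_iSup_iff, exists_prop] using
      ENNReal.sub_lt_self hs_ne_top (pos_of_gt (not_le.1 hsmall)).ne' hε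
  exact ⟨B', hB'𝒢, hBB', fun B'' h𝒢 hB'' =>
    (hle B'' h𝒢 hB'').trans (tsub_le_iff_right.1 hlt.le)⟩

section Atomless

variable {Ω : Type*} [MeasurableSpace Ω]

def IsAtomless (P : Measure Ω) : Prop :=
  ∀ A : Set Ω, MeasurableSet A → 0 < P A →
    ∃ B : Set Ω, B ⊆ A ∧ MeasurableSet B ∧ 0 < P B ∧ P B < P A

theorem measure_iUnion_fin_eq_mul {P : Measure Ω} {n : ℕ} {E : Fin n → Set Ω}
    (hE : ∀ i, MeasurableSet (E i)) (hdisj : Pairwise (Disjoint on E)) {t : ℝ≥0∞}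
    (hPE : ∀ i, P (E i) = t) : P (⋃ i, E i) = n * t := by
  rw [measure_iUnion hdisj hE, tsum_fintype, Finset.sum_congr rfl fun i _ => hPE i]
  simp

namespace IsAtomless

variable {P : Measure Ω} [IsFiniteMeasure P]

theorem exists_subset_two_mul_measure_le (hP : IsAtomless P) {A : Set Ω}
    (hA : MeasurableSet A) (hApos : 0 < P A) :
    ∃ D ⊆ A, MeasurableSet D ∧ 0 < P D ∧ 2 * P D ≤ P A := by
  obtain ⟨B, hBA, hB, hBpos, hBlt⟩ := hP A hA hApos
  have hsplit : P B + P (A \ B) = P A := by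
    rw [measure_add_sdiff hB.nullMeasurableSet, union_eq_right.2 hBA]
  have hdiff_pos : 0 < P (A \ B) := by
    rw [measure_sdiff hBA hB.nullMeasurableSet (measure_ne_top P B)]
    exact tsub_pos_of_lt hBlt
  rcases le_total (P B) (P (A \ B)) with h | h
  · exact ⟨B, hBA, hB, hBpos, by rw [two_mul, ← hsplit]; gcongr⟩
  · exact ⟨A \ B, sdiff_subset, hA.diff hB, hdiff_pos, by rw [two_mul, ← hsplit]; gcongr⟩

theorem exists_subset_measure_pos_le (hP : IsAtomless P) {A : Set Ω} (hA : MeasurableSet A)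
    (hApos : 0 < P A) {ε : ℝ≥0∞} (hε : 0 < ε) :
    ∃ D ⊆ A, MeasurableSet D ∧ 0 < P D ∧ P D ≤ ε := by
  have halving : ∀ n : ℕ, ∃ D ⊆ A, MeasurableSet D ∧ 0 < P D ∧ 2 ^ n * P D ≤ P A := by
    intro n
    induction n with
    | zero => exact ⟨A, subset_rfl, hA, hApos, by simp⟩
    | succ n ih =>
      obtain ⟨D, hDA, hD, hDpos, hDle⟩ := ih
      obtain ⟨D', hD'D, hD', hD'pos, hD'le⟩ := hP.exists_subset_two_mul_measure_le hD hDpos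
      refine ⟨D', hD'D.trans hDA, hD', hD'pos, le_trans ?_ hDle⟩
      rw [pow_succ, mul_assoc]
      gcongr
  obtain ⟨n, hn⟩ := ENNReal.exists_nat_gt (ENNReal.div_lt_top (measure_ne_top P A) hε.ne').ne
  have hA_lt : P A < 2 ^ n * ε := by
    rw [ENNReal.div_lt_iff (Or.inl hε.ne') (Or.inr (measure_ne_top P A))] at hn
    refine hn.trans_le (mul_le_mul_left ?_ ε)
    exact_mod_cast (Nat.lt_two_pow_self).le
  obtain ⟨D, hDA, hD, hDpos, hDle⟩ := halving n
  refine ⟨D, hDA, hD, hDpos, ?_⟩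
  exact (ENNReal.mul_le_mul_iff_right (by positivity) (by simp)).1 (hDle.trans hA_lt.le)

theorem measure_eq_of_maximal (hP : IsAtomless P) {A S : Set Ω} (hA : MeasurableSet A)
    (hS : MeasurableSet S) (hSA : S ⊆ A) {t : ℝ≥0∞} (hSt : P S ≤ t) (ht : t ≤ P A)
    (hmax : ∀ D ⊆ A \ S, MeasurableSet D → P S + P D ≤ t → P D = 0) : P S = t := by
  refine hSt.antisymm (not_lt.1 fun hlt => ?_)
  have hrest : 0 < P (A \ S) := by
    rw [measure_sdiff hSA hS.nullMeasurableSet (measure_ne_top P _)]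
    exact tsub_pos_of_lt (hlt.trans_le ht)
  obtain ⟨D, hDsub, hD, hDpos, hDle⟩ :=
    hP.exists_subset_measure_pos_le (hA.diff hS) hrest (tsub_pos_of_lt hlt)
  refine hDpos.ne' (hmax D hDsub hD ?_)
  exact (add_le_add_right hDle _).trans (add_tsub_cancel_of_le hlt.le).le

/-- Sierpiński's theorem. -/
theorem exists_subset_measure_eq (hP : IsAtomless P) {A : Set Ω} (hA : MeasurableSet A)
    {t : ℝ≥0∞} (ht : t ≤ P A) : ∃ B ⊆ A, MeasurableSet B ∧ P B = t := by
  set 𝒢 := {B | B ⊆ A ∧ MeasurableSet B ∧ P B ≤ t}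
  have ht_ne_top : t ≠ ∞ := ne_top_of_le_ne_top (measure_ne_top P A) ht
  -- greedily enlarge within `𝒢`, up to `1 / n` of the best possible measure at step `n`
  have step : ∀ (n : ℕ) (B : Set Ω), B ∈ 𝒢 → ∃ B' ∈ 𝒢, B ⊆ B' ∧
      ∀ B'' ∈ 𝒢, B ⊆ B'' → P B'' ≤ P B' + (n : ℝ≥0∞)⁻¹ := fun n _ hB =>
    exists_superset_mem_forall_le_add ht_ne_top (fun _ h => h.2.2) hB
      (ENNReal.inv_ne_zero.2 (ENNReal.natCast_ne_top n))
  choose F hF𝒢 hFsub hFmax using step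
  let seq : ℕ → 𝒢 := fun n =>
    Nat.rec ⟨∅, empty_subset A, .empty, by simp⟩ (fun n B => ⟨F n B.1 B.2, hF𝒢 ..⟩) n
  have hmono : Monotone fun n => (seq n).1 := monotone_nat_of_le_succ fun n => hFsub ..
  set S := ⋃ n, (seq n).1
  have hS : MeasurableSet S := .iUnion fun n => (seq n).2.2.1
  have hSA : S ⊆ A := iUnion_subset fun n => (seq n).2.1
  have hSt : P S ≤ t := by
    rw [hmono.measure_iUnion]
    exact iSup_le fun n => (seq n).2.2.2
  refine ⟨S, hSA, hS, hP.measure_eq_of_maximal hA hS hSA hSt ht fun D hD hDm hSD => ?_⟩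
  have hdisj : Disjoint S D := (subset_sdiff.1 hD).2.symm
  have hSD𝒢 : S ∪ D ∈ 𝒢 :=
    ⟨union_subset hSA (hD.trans sdiff_subset), hS.union hDm, by rwa [measure_union hdisj hDm]⟩
  by_contra hD0
  obtain ⟨n, hn⟩ := ENNReal.exists_inv_nat_lt hD0
  have : P S + P D ≤ P S + (n : ℝ≥0∞)⁻¹ :=
    calc P S + P D = P (S ∪ D) := (measure_union hdisj hDm).symm
      _ ≤ P (seq (n + 1)).1 + (n : ℝ≥0∞)⁻¹ :=
          hFmax n _ (seq n).2 _ hSD𝒢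
            ((subset_iUnion (fun m => (seq m).1) n).trans subset_union_left)
      _ ≤ P S + (n : ℝ≥0∞)⁻¹ := by gcongr; exact subset_iUnion (fun m => (seq m).1) (n + 1)
  rw [ENNReal.add_le_add_iff_left (measure_ne_top P _)] at this
  exact (this.trans_lt hn).false

theorem exists_pairwise_disjoint_measure_eq (hP : IsAtomless P) (n : ℕ) {t : ℝ≥0∞}
    (ht : n * t ≤ P univ) :
    ∃ E : Fin n → Set Ω, (∀ i, MeasurableSet (E i)) ∧ Pairwise (Disjoint on E) ∧
      ∀ i, P (E i) = t := by
  induction n with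
  | zero => exact ⟨Fin.elim0, Fin.rec0, fun i => Fin.elim0 i, Fin.rec0⟩
  | succ n ih =>
    obtain ⟨E, hE, hdisj, hPE⟩ := ih (le_trans (by gcongr; simp) ht)
    have hPV : P (⋃ i, E i) = n * t := measure_iUnion_fin_eq_mul hE hdisj hPE
    have hroom : t ≤ P (⋃ i, E i)ᶜ := by
      rw [measure_compl (.iUnion hE) (measure_ne_top P _), hPV]
      exact ENNReal.le_sub_of_add_le_left (by simp [hPV ▸ measure_ne_top P _]) (by
        simpa [add_mul, add_comm] using ht)
    obtain ⟨D, hDV, hD, hPD⟩ := hP.exists_subset_measure_eq (MeasurableSet.iUnion hE).compl hroom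
    refine ⟨Fin.cons D E, Fin.cases hD hE, ?_, Fin.cases hPD hPE⟩
    have hDE : ∀ i, Disjoint D (E i) := fun i =>
      (subset_compl_iff_disjoint_right.1 hDV).mono_right (subset_iUnion E i)
    intro i j hij
    induction i using Fin.cases <;> induction j using Fin.cases
    · exact absurd rfl hij
    · exact hDE _
    · exact (hDE _).symm
    · exact hdisj (ne_of_apply_ne Fin.succ hij)

theorem exists_measure_eq [IsProbabilityMeasure P] (hP : IsAtomless P) {α : ℝ} (hα1 : α ≤ 1) :
    ∃ A, MeasurableSet A ∧ P A = ENNReal.ofReal α := by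
  obtain ⟨A, -, hA, hPA⟩ := hP.exists_subset_measure_eq MeasurableSet.univ
    (t := ENNReal.ofReal α) (by simpa using hα1)
  exact ⟨A, hA, hPA⟩

end IsAtomless

end Atomless

section TwoPoint

variable {Ω : Type}

open Classical in
noncomputable def twoPoint (A : Set Ω) (x y : ℝ) : Ω → ℝ := A.piecewise (fun _ => x) (fun _ => y)

variable {A B E V : Set Ω} {x y x' y' : ℝ}

theorem twoPoint_of_mem {ω : Ω} (h : ω ∈ A) : twoPoint A x y ω = x := by
  simp [twoPoint, h]

theorem twoPoint_of_notMem {ω : Ω} (h : ω ∉ A) : twoPoint A x y ω = y := by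
  simp [twoPoint, h]

theorem twoPoint_univ : twoPoint (univ : Set Ω) x y = fun _ => x := by
  ext ω; exact twoPoint_of_mem (mem_univ ω)

theorem twoPoint_empty : twoPoint (∅ : Set Ω) x y = fun _ => y := by
  ext ω; exact twoPoint_of_notMem (notMem_empty ω)

theorem twoPoint_add_const (h : ℝ) :
    (fun ω => twoPoint A x y ω + h) = twoPoint A (x + h) (y + h) := by
  ext ω; by_cases hω : ω ∈ A <;> simp [twoPoint_of_mem, twoPoint_of_notMem, hω]

theorem twoPoint_mono (hx : x ≤ x') (hy : y ≤ y') : twoPoint A x y ≤ twoPoint A x' y' := by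
  intro ω; by_cases hω : ω ∈ A <;> simp [twoPoint_of_mem, twoPoint_of_notMem, hω, hx, hy]

theorem twoPoint_anti_set (hBA : B ⊆ A) (hxy : x ≤ y) : twoPoint A x y ≤ twoPoint B x y := by
  intro ω
  by_cases hωB : ω ∈ B
  · simp [twoPoint_of_mem, hωB, hBA hωB]
  · rw [twoPoint_of_notMem hωB]
    by_cases hωA : ω ∈ A <;> simp [twoPoint_of_mem, twoPoint_of_notMem, hωA, hxy]

theorem twoPoint_le_max (ω : Ω) : twoPoint A x y ω ≤ max x y := by
  by_cases hω : ω ∈ A <;> simp [twoPoint_of_mem, twoPoint_of_notMem, hω]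

theorem abs_twoPoint_le (ω : Ω) : |twoPoint A x y ω| ≤ max |x| |y| := by
  by_cases hω : ω ∈ A <;> simp [twoPoint_of_mem, twoPoint_of_notMem, hω]

theorem sum_smul_piecewise_twoPoint {n : ℕ} (hn : n ≠ 0) {E : Fin n → Set Ω}
    [∀ i, DecidablePred (· ∈ E i)] (hdisj : Pairwise (Disjoint on E)) (x y : ℝ) :
    ∑ i, (n : ℝ)⁻¹ • (E i).piecewise (fun _ => 0) (twoPoint (⋃ i, E i) x y) =
      twoPoint (⋃ i, E i) ((1 - (n : ℝ)⁻¹) * x) y := by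
  ext ω
  simp only [Finset.sum_apply, Pi.smul_apply, smul_eq_mul, ← Finset.mul_sum]
  by_cases hω : ω ∈ ⋃ i, E i
  · obtain ⟨p, hp⟩ := mem_iUnion.1 hω
    have hval : ∀ i, (E i).piecewise (fun _ => 0) (twoPoint (⋃ i, E i) x y) ω =
        if i = p then 0 else x := by
      intro i
      split_ifs with hip
      · subst hip; simp [hp]
      · simp [(hdisj hip).notMem_of_mem_right hp, twoPoint_of_mem hω]
    have hn' : (n : ℝ) ≠ 0 := by exact_mod_cast hn
    simp only [hval, twoPoint_of_mem hω]
    rw [Finset.sum_ite, Finset.sum_const_zero, zero_add, Finset.filter_ne', Finset.sum_const,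
      Finset.card_erase_of_mem (Finset.mem_univ p), Finset.card_univ, Fintype.card_fin,
      nsmul_eq_mul, Nat.cast_sub p.pos, Nat.cast_one]
    field_simp
  · have hωi : ∀ i, ω ∉ E i := fun i h => hω (mem_iUnion.2 ⟨i, h⟩)
    simp [hωi, twoPoint_of_notMem hω, hn]

variable [MeasurableSpace Ω]

theorem measurable_twoPoint (hA : MeasurableSet A) : Measurable (twoPoint A x y) :=
  Measurable.piecewise hA measurable_const measurable_const

theorem bddMeas_const (P : Measure Ω) (c : ℝ) : BddMeas P fun _ => c :=
  ⟨measurable_const, |c|, ae_of_all _ fun _ => le_rfl⟩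

theorem bddMeas_twoPoint (P : Measure Ω) (hA : MeasurableSet A) : BddMeas P (twoPoint A x y) :=
  ⟨measurable_twoPoint hA, max |x| |y|, ae_of_all _ abs_twoPoint_le⟩

theorem BddMeas.piecewise {P : Measure Ω} {f g : Ω → ℝ} [DecidablePred (· ∈ E)]
    (hE : MeasurableSet E) (hf : BddMeas P f) (hg : BddMeas P g) : BddMeas P (E.piecewise f g) := by
  obtain ⟨C, hC⟩ := hf.2
  obtain ⟨D, hD⟩ := hg.2
  refine ⟨hf.1.piecewise hE hg.1, max C D, ?_⟩
  filter_upwards [hC, hD] with ω hCω hDω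
  by_cases hω : ω ∈ E <;> simp [hω, hCω, hDω]

theorem BddMeas.smul_add_smul {P : Measure Ω} {ξ η : Ω → ℝ} (hξ : BddMeas P ξ)
    (hη : BddMeas P η) (a b : ℝ) : BddMeas P (a • ξ + b • η) := by
  obtain ⟨C, hC⟩ := hξ.2
  obtain ⟨D, hD⟩ := hη.2
  refine ⟨(hξ.1.const_smul a).add (hη.1.const_smul b), |a| * C + |b| * D, ?_⟩
  filter_upwards [hC, hD] with ω hCω hDω
  calc |a * ξ ω + b * η ω| ≤ |a| * |ξ ω| + |b| * |η ω| := by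
        simpa only [abs_mul] using abs_add_le (a * ξ ω) (b * η ω)
    _ ≤ |a| * C + |b| * D := by gcongr

theorem map_piecewise (μ : Measure Ω) [DecidablePred (· ∈ A)] (hA : MeasurableSet A)
    {f g : Ω → ℝ} (hf : Measurable f) (hg : Measurable g) :
    μ.map (A.piecewise f g) = (μ.restrict A).map f + (μ.restrict Aᶜ).map g := by
  conv_lhs => rw [← μ.restrict_add_restrict_compl hA]
  rw [Measure.map_add _ _ (hf.piecewise hA hg), Measure.map_congr (piecewise_ae_eq_restrict hA),
    Measure.map_congr (piecewise_ae_eq_restrict_compl hA)]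

theorem map_twoPoint (μ : Measure Ω) (hA : MeasurableSet A) :
    μ.map (twoPoint A x y) = μ A • Measure.dirac x + μ Aᶜ • Measure.dirac y := by
  classical
  rw [twoPoint, map_piecewise μ hA measurable_const measurable_const, Measure.map_const,
    Measure.map_const, Measure.restrict_apply_univ, Measure.restrict_apply_univ]

theorem hasDyadicLaw_twoPoint {P : Measure Ω} [IsProbabilityMeasure P] (hA : MeasurableSet A)
    {α : ℝ} (hPA : P A = ENNReal.ofReal α) (hα : 0 ≤ α) :
    HasDyadicLaw P (twoPoint A x y) x y α := by
  rw [HasDyadicLaw, map_twoPoint P hA, prob_compl_eq_one_sub hA, hPA, ENNReal.ofReal_sub 1 hα,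
    ENNReal.ofReal_one]

theorem map_piecewise_const_twoPoint (μ : Measure Ω) [DecidablePred (· ∈ E)]
    (hE : MeasurableSet E) (hV : MeasurableSet V) (hEV : E ⊆ V) (z x y : ℝ) :
    μ.map (E.piecewise (fun _ => z) (twoPoint V x y)) =
      μ E • Measure.dirac z + μ (V \ E) • Measure.dirac x + μ Vᶜ • Measure.dirac y := by
  rw [map_piecewise μ hE measurable_const (measurable_twoPoint hV), Measure.map_const,
    map_twoPoint _ hV, Measure.restrict_apply_univ, Measure.restrict_apply hV,
    Measure.restrict_apply hV.compl, inter_eq_left.2 (compl_subset_compl.2 hEV), ← sdiff_eq,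
    add_assoc]

theorem map_piecewise_zero_twoPoint_eq_mixture {P : Measure Ω} [DecidablePred (· ∈ E)]
    (hE : MeasurableSet E) (hV : MeasurableSet V) (hEV : E ⊆ V) {l m : ℝ} (hl : 0 ≤ l)
    (hPE : P E = ENNReal.ofReal (1 - l)) (hPVE : P (V \ E) = ENNReal.ofReal (l * m))
    (hPVc : P Vᶜ = ENNReal.ofReal (l * (1 - m))) (x y : ℝ) :
    P.map (E.piecewise (fun _ => 0) (twoPoint V x y)) =
      ENNReal.ofReal l • (ENNReal.ofReal m • Measure.dirac x +
        ENNReal.ofReal (1 - m) • Measure.dirac y) + ENNReal.ofReal (1 - l) • Measure.dirac 0 := by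
  rw [map_piecewise_const_twoPoint P hE hV hEV, hPE, hPVE, hPVc, ENNReal.ofReal_mul hl,
    ENNReal.ofReal_mul hl, smul_add, mul_smul, mul_smul]
  abel

end TwoPoint

section MonetaryUtility

variable {Ω : Type} [MeasurableSpace Ω] (P : Measure Ω) (u : (Ω → ℝ) → ℝ)

def IsTranslationInvariant : Prop :=
  ∀ ξ : Ω → ℝ, BddMeas P ξ → ∀ h : ℝ, u (fun ω => ξ ω + h) = u ξ + h

def IsMonotone : Prop :=
  ∀ ξ η : Ω → ℝ, BddMeas P ξ → BddMeas P η → (∀ᵐ ω ∂P, ξ ω ≤ η ω) → u ξ ≤ u η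

def IsLawInvariant : Prop :=
  ∀ ξ η : Ω → ℝ, BddMeas P ξ → BddMeas P η → P.map ξ = P.map η → u ξ = u η

def IsConcave : Prop :=
  ∀ ξ η : Ω → ℝ, BddMeas P ξ → BddMeas P η → ∀ l : ℝ, 0 ≤ l → l ≤ 1 →
    l * u ξ + (1 - l) * u η ≤ u (fun ω => l * ξ ω + (1 - l) * η ω)

def HasFatouProperty : Prop :=
  ∀ (ξs : ℕ → Ω → ℝ) (ξ : Ω → ℝ), (∀ n, BddMeas P (ξs n)) → BddMeas P ξ →
    (∃ C : ℝ, ∀ n, ∀ᵐ ω ∂P, |ξs n ω| ≤ C) → TendstoInMeasure P ξs atTop ξ →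
    limsup (fun n => u (ξs n)) atTop ≤ u ξ

variable {P u}

theorem IsTranslationInvariant.apply_const (hTI : IsTranslationInvariant P u)
    (hNorm : u (fun _ => 0) = 0) (c : ℝ) : u (fun _ => c) = c := by
  simpa [hNorm] using hTI _ (bddMeas_const P 0) c

theorem IsTranslationInvariant.apply_twoPoint_sub (hTI : IsTranslationInvariant P u)
    {U : Set Ω} (hU : MeasurableSet U) (x y c : ℝ) :
    u (twoPoint U (x - c) (y - c)) = u (twoPoint U x y) - c := by
  have := hTI (twoPoint U x y) (bddMeas_twoPoint P hU) (-c)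
  rwa [twoPoint_add_const, ← sub_eq_add_neg, ← sub_eq_add_neg, ← sub_eq_add_neg] at this

theorem IsMonotone.apply_le_apply (hMono : IsMonotone P u) {ξ η : Ω → ℝ} (hξ : BddMeas P ξ)
    (hη : BddMeas P η) (h : ξ ≤ η) : u ξ ≤ u η :=
  hMono ξ η hξ hη (ae_of_all _ h)

theorem IsConcave.convex_superlevelSet (hConc : IsConcave P u) (r : ℝ) :
    Convex ℝ {ξ | BddMeas P ξ ∧ r ≤ u ξ} := by
  rintro ξ ⟨hξ, hrξ⟩ η ⟨hη, hrη⟩ a b ha hb hab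
  refine ⟨hξ.smul_add_smul hη a b, ?_⟩
  obtain rfl : b = 1 - a := by linarith
  calc r = a * r + (1 - a) * r := by ring
    _ ≤ a * u ξ + (1 - a) * u η := by gcongr
    _ ≤ u (a • ξ + (1 - a) • η) := hConc ξ η hξ hη a ha (by linarith)

theorem IsConcave.zero_le_apply_twoPoint_iUnion (hConc : IsConcave P u) {n : ℕ} (hn : n ≠ 0)
    {E : Fin n → Set Ω} [∀ i, DecidablePred (· ∈ E i)] (hE : ∀ i, MeasurableSet (E i))
    (hdisj : Pairwise (Disjoint on E)) {x y : ℝ}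
    (h : ∀ i, 0 ≤ u ((E i).piecewise (fun _ => 0) (twoPoint (⋃ i, E i) x y))) :
    0 ≤ u (twoPoint (⋃ i, E i) ((1 - (n : ℝ)⁻¹) * x) y) := by
  have hn' : (n : ℝ) ≠ 0 := Nat.cast_ne_zero.2 hn
  rw [← sum_smul_piecewise_twoPoint hn hdisj]
  refine ((hConc.convex_superlevelSet 0).sum_mem (fun _ _ => by positivity)
    (by simp [Finset.card_univ, hn']) fun i _ => ⟨?_, h i⟩).2
  exact (bddMeas_const P 0).piecewise (hE i) (bddMeas_twoPoint P (.iUnion hE))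

theorem tendstoInMeasure_twoPoint [IsFiniteMeasure P] {B : ℕ → Set Ω} {U : Set Ω}
    (hB : ∀ n, MeasurableSet (B n)) (hBU : ∀ n, B n ⊆ U)
    (hlim : Tendsto (fun n => P (B n)) atTop (𝓝 (P U))) (x y : ℝ) :
    TendstoInMeasure P (fun n => twoPoint (B n) x y) atTop (twoPoint U x y) := by
  intro ε hε
  have hsub : ∀ n, {ω | ε ≤ edist (twoPoint (B n) x y ω) (twoPoint U x y ω)} ⊆ U \ B n := by
    intro n ω hω
    by_cases hωB : ω ∈ B n
    · rw [mem_ofPred_eq, twoPoint_of_mem hωB, twoPoint_of_mem (hBU n hωB), edist_self] at hω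
      exact absurd hω (not_le.2 hε)
    by_cases hωU : ω ∈ U
    · exact ⟨hωU, hωB⟩
    · rw [mem_ofPred_eq, twoPoint_of_notMem hωB, twoPoint_of_notMem hωU, edist_self] at hω
      exact absurd hω (not_le.2 hε)
  have hdiff : Tendsto (fun n => P (U \ B n)) atTop (𝓝 0) := by
    simp_rw [measure_sdiff (hBU _) (hB _).nullMeasurableSet (measure_ne_top _ _)]
    simpa using ENNReal.Tendsto.sub tendsto_const_nhds hlim (Or.inl (measure_ne_top P U))
  exact tendsto_of_tendsto_of_tendsto_of_le_of_le tendsto_const_nhds hdiff (fun _ => zero_le)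
    fun n => measure_mono (hsub n)

end MonetaryUtility

section DyadicLevels

variable {Ω : Type} [MeasurableSpace Ω] {P : Measure Ω} {u : (Ω → ℝ) → ℝ} {k a : ℝ}

theorem bddAbove_Cset : BddAbove (Cset P u k a) := ⟨1, fun _ h => h.2.1⟩

variable [IsProbabilityMeasure P]

theorem IsLawInvariant.dyadicGE_iff (hLaw : IsLawInvariant P u) {A : Set Ω}
    (hA : MeasurableSet A) {x y α : ℝ} (hPA : P A = ENNReal.ofReal α) (hα : 0 ≤ α) :
    DyadicGE P u x y α ↔ 0 ≤ u (twoPoint A x y) := by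
  have hlaw : HasDyadicLaw P (twoPoint A x y) x y α := hasDyadicLaw_twoPoint hA hPA hα
  refine ⟨fun ⟨ξ, hξ, hξlaw, hu⟩ => ?_, fun hu => ⟨_, bddMeas_twoPoint P hA, hlaw, hu⟩⟩
  rwa [hLaw _ _ (bddMeas_twoPoint P hA) hξ (hlaw.trans hξlaw.symm)]

theorem dyadicGE_mono (hP : IsAtomless P) (hLaw : IsLawInvariant P u) (hMono : IsMonotone P u)
    {k' a' α : ℝ} (hk : k ≤ k') (ha : a ≤ a') (hα0 : 0 ≤ α) (hα1 : α ≤ 1)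
    (h : DyadicGE P u k a α) : DyadicGE P u k' a' α := by
  obtain ⟨A, hA, hPA⟩ := hP.exists_measure_eq hα1
  rw [hLaw.dyadicGE_iff hA hPA hα0] at h ⊢
  exact h.trans (hMono.apply_le_apply (bddMeas_twoPoint P hA) (bddMeas_twoPoint P hA)
    (twoPoint_mono hk ha))

theorem dyadicGE_of_le (hP : IsAtomless P) (hLaw : IsLawInvariant P u) (hMono : IsMonotone P u)
    (hka : k ≤ a) {α β : ℝ} (hα0 : 0 ≤ α) (hαβ : α ≤ β) (hβ1 : β ≤ 1)
    (h : DyadicGE P u k a β) : DyadicGE P u k a α := by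
  obtain ⟨A, hA, hPA⟩ := hP.exists_measure_eq hβ1
  obtain ⟨B, hBA, hB, hPB⟩ :=
    hP.exists_subset_measure_eq hA (hPA ▸ ENNReal.ofReal_le_ofReal hαβ)
  rw [hLaw.dyadicGE_iff hA hPA (hα0.trans hαβ)] at h
  rw [hLaw.dyadicGE_iff hB hPB hα0]
  exact h.trans (hMono.apply_le_apply (bddMeas_twoPoint P hA) (bddMeas_twoPoint P hB)
    (twoPoint_anti_set hBA hka))

theorem zero_mem_Cset (hTI : IsTranslationInvariant P u) (hNorm : u (fun _ => 0) = 0)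
    (ha : 0 ≤ a) : (0 : ℝ) ∈ Cset P u k a := by
  refine ⟨le_rfl, zero_le_one, twoPoint ∅ k a, bddMeas_twoPoint P .empty,
    hasDyadicLaw_twoPoint .empty (by simp) le_rfl, ?_⟩
  rwa [twoPoint_empty, hTI.apply_const hNorm]

theorem one_notMem_Cset (hTI : IsTranslationInvariant P u) (hNorm : u (fun _ => 0) = 0)
    (hLaw : IsLawInvariant P u) (hk : k < 0) : (1 : ℝ) ∉ Cset P u k a := by
  rintro ⟨-, -, h⟩
  rw [hLaw.dyadicGE_iff .univ (by simp) zero_le_one, twoPoint_univ, hTI.apply_const hNorm] at h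
  exact h.not_gt hk

theorem alphaMax_mem_Cset (hP : IsAtomless P) (hTI : IsTranslationInvariant P u)
    (hNorm : u (fun _ => 0) = 0) (hMono : IsMonotone P u) (hLaw : IsLawInvariant P u)
    (hFatou : HasFatouProperty P u) (ha : 0 ≤ a) : alphaMax P u k a ∈ Cset P u k a := by
  have hne : (Cset P u k a).Nonempty := ⟨0, zero_mem_Cset hTI hNorm ha⟩
  obtain ⟨αs, -, hαs, hmem⟩ := exists_seq_tendsto_sSup hne bddAbove_Cset
  have hm0 : 0 ≤ alphaMax P u k a := (hmem 0).1.trans (le_csSup bddAbove_Cset (hmem 0))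
  have hm1 : alphaMax P u k a ≤ 1 := csSup_le hne fun _ h => h.2.1
  obtain ⟨U, hU, hPU⟩ := hP.exists_measure_eq hm1
  -- realise the approximating levels by subsets of a single set `U`, so that Fatou applies
  have hsub : ∀ n, ∃ B ⊆ U, MeasurableSet B ∧ P B = ENNReal.ofReal (αs n) := fun n =>
    hP.exists_subset_measure_eq hU
      (hPU ▸ ENNReal.ofReal_le_ofReal (le_csSup bddAbove_Cset (hmem n)))
  choose B hBU hB hPB using hsub
  have hu : ∀ n, 0 ≤ u (twoPoint (B n) k a) := fun n =>
    (hLaw.dyadicGE_iff (hB n) (hPB n) (hmem n).1).1 (hmem n).2.2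
  have hub : ∀ n, u (twoPoint (B n) k a) ≤ max k a := fun n => by
    simpa only [hTI.apply_const hNorm] using hMono.apply_le_apply (bddMeas_twoPoint P (hB n))
      (bddMeas_const P _) twoPoint_le_max
  have hlim : Tendsto (fun n => P (B n)) atTop (𝓝 (P U)) := by
    simp_rw [hPB, hPU]
    exact (ENNReal.continuous_ofReal.tendsto _).comp hαs
  have hfatou := hFatou _ _ (fun n => bddMeas_twoPoint P (hB n)) (bddMeas_twoPoint P hU)
    ⟨_, fun n => ae_of_all _ abs_twoPoint_le⟩ (tendstoInMeasure_twoPoint hB hBU hlim k a)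
  refine ⟨hm0, hm1, (hLaw.dyadicGE_iff hU hPU hm0).2 ?_⟩
  exact (le_limsup_of_frequently_le (.of_forall hu) (isBoundedUnder_of ⟨_, hub⟩)).trans hfatou

theorem CxLS.apply_piecewise_zero_twoPoint (hCxLS : CxLS P u) (hNorm : u (fun _ => 0) = 0)
    {U E V : Set Ω} [DecidablePred (· ∈ E)] (hU : MeasurableSet U) (hE : MeasurableSet E)
    (hV : MeasurableSet V) (hEV : E ⊆ V) {x y m l : ℝ} (hm : 0 ≤ m)
    (hPU : P U = ENNReal.ofReal m) (hl0 : 0 < l) (hl1 : l < 1)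
    (hPE : P E = ENNReal.ofReal (1 - l)) (hPVE : P (V \ E) = ENNReal.ofReal (l * m))
    (hPVc : P Vᶜ = ENNReal.ofReal (l * (1 - m))) (hu : u (twoPoint U x y) = 0) :
    u (E.piecewise (fun _ => 0) (twoPoint V x y)) = 0 := by
  have hmap0 : P.map (fun _ => (0 : ℝ)) = Measure.dirac 0 := by simp [Measure.map_const]
  have hlaw := map_piecewise_zero_twoPoint_eq_mixture hE hV hEV hl0.le hPE hPVE hPVc x y
  rw [← hasDyadicLaw_twoPoint hU hPU hm, ← hmap0] at hlaw
  rw [hCxLS _ _ _ (bddMeas_twoPoint P hU) (bddMeas_const P 0)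
    ((bddMeas_const P 0).piecewise hE (bddMeas_twoPoint P hV)) (by rw [hu, hNorm]) l hl0 hl1 hlaw,
    hu]

theorem exists_gt_zero_le_apply_twoPoint (hP : IsAtomless P) (hNorm : u (fun _ => 0) = 0)
    (hConc : IsConcave P u) (hCxLS : CxLS P u) {U : Set Ω} (hU : MeasurableSet U) {m : ℝ}
    (hPU : P U = ENNReal.ofReal m) (hm0 : 0 < m) (hm1 : m < 1) {x y : ℝ}
    (hu : u (twoPoint U x y) = 0) {n : ℕ} (hn : 1 < n) :
    ∃ V, MeasurableSet V ∧ ∃ β, m < β ∧ β ≤ 1 ∧ P V = ENNReal.ofReal β ∧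
      0 ≤ u (twoPoint V ((1 - (n : ℝ)⁻¹) * x) y) := by
  classical
  obtain ⟨l, e, hl0, hl1, he0, hle, hlm, hlm', hmNe, hNe1⟩ :=
    exists_mixture_weights hm0 hm1 (Nat.one_lt_cast.2 hn)
  obtain ⟨E, hE, hdisj, hPE⟩ := hP.exists_pairwise_disjoint_measure_eq n
    (t := ENNReal.ofReal e) (by
      rw [measure_univ, ← ENNReal.ofReal_natCast, ← ENNReal.ofReal_mul (Nat.cast_nonneg n)]
      exact ENNReal.ofReal_le_one.2 hNe1)
  have hV : MeasurableSet (⋃ i, E i) := .iUnion hE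
  have hPV : P (⋃ i, E i) = ENNReal.ofReal (n * e) := by
    rw [measure_iUnion_fin_eq_mul hE hdisj hPE, ← ENNReal.ofReal_natCast,
      ← ENNReal.ofReal_mul (Nat.cast_nonneg n)]
  refine ⟨⋃ i, E i, hV, n * e, hmNe, hNe1, hPV,
    hConc.zero_le_apply_twoPoint_iUnion (by omega) hE hdisj fun i => ?_⟩
  have hEV : E i ⊆ ⋃ i, E i := subset_iUnion E i
  refine (hCxLS.apply_piecewise_zero_twoPoint hNorm hU (hE i) hV hEV hm0.le hPU hl0 hl1
    (by rw [hPE, hle]) ?_ ?_ hu).ge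
  · rw [measure_sdiff hEV (hE i).nullMeasurableSet (measure_ne_top P _), hPV, hPE,
      ← ENNReal.ofReal_sub _ he0, hlm]
  · rw [prob_compl_eq_one_sub hV, hPV, ← ENNReal.ofReal_one,
      ← ENNReal.ofReal_sub _ (by positivity), hlm']

theorem exists_dyadicGE_gt_of_pos (hP : IsAtomless P) (hTI : IsTranslationInvariant P u)
    (hNorm : u (fun _ => 0) = 0) (hMono : IsMonotone P u) (hConc : IsConcave P u)
    (hCxLS : CxLS P u) {U : Set Ω} (hU : MeasurableSet U) {m : ℝ}
    (hPU : P U = ENNReal.ofReal m) (hm0 : 0 < m) (hm1 : m < 1) (hc : 0 < u (twoPoint U k a)) :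
    ∃ α, m < α ∧ α ≤ 1 ∧ DyadicGE P u k a α := by
  set c := u (twoPoint U k a)
  have hshift : u (twoPoint U (k - c) (a - c)) = 0 := by
    rw [hTI.apply_twoPoint_sub hU, sub_self]
  -- averaging `n` copies dilutes the atom at `0` enough once `(n - 1) * c ≥ -k`
  obtain ⟨n, hn⟩ := exists_nat_gt (max (-k / c) 0 + 1)
  have hn1 : 1 < (n : ℝ) := by linarith [le_max_right (-k / c) 0]
  have hnc : -k / c < n - 1 := by linarith [le_max_left (-k / c) 0]
  rw [div_lt_iff₀ hc] at hnc
  obtain ⟨V, hV, β, hmβ, hβ1, hPV, hW⟩ := exists_gt_zero_le_apply_twoPoint hP hNorm hConc hCxLS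
    hU hPU hm0 hm1 hshift (Nat.one_lt_cast.1 hn1)
  refine ⟨β, hmβ, hβ1, twoPoint V k a, bddMeas_twoPoint P hV,
    hasDyadicLaw_twoPoint hV hPV (by linarith), hW.trans ?_⟩
  refine hMono.apply_le_apply (bddMeas_twoPoint P hV) (bddMeas_twoPoint P hV)
    (twoPoint_mono ?_ (by linarith))
  have hkc : -c ≤ (k - c) / n := by rw [le_div_iff₀ (by positivity)]; linarith
  rw [sub_mul, one_mul, inv_mul_eq_div]
  linarith

theorem Cset_eq_Icc (hP : IsAtomless P) (hTI : IsTranslationInvariant P u)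
    (hNorm : u (fun _ => 0) = 0) (hMono : IsMonotone P u) (hLaw : IsLawInvariant P u)
    (hFatou : HasFatouProperty P u) (hka : k ≤ a) (ha : 0 ≤ a) :
    Cset P u k a = Icc 0 (alphaMax P u k a) := by
  have hmax : alphaMax P u k a ∈ Cset P u k a :=
    alphaMax_mem_Cset hP hTI hNorm hMono hLaw hFatou ha
  ext α
  refine ⟨fun h => ⟨h.1, le_csSup bddAbove_Cset h⟩, fun h => ?_⟩
  exact ⟨h.1, h.2.trans hmax.2.1, dyadicGE_of_le hP hLaw hMono hka h.1 h.2 hmax.2.1 hmax.2.2⟩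

theorem alphaMax_pos (hP : IsAtomless P) (hLaw : IsLawInvariant P u) (hMono : IsMonotone P u)
    (hkK : Kdef P u < k) (ha : 0 < a) : 0 < alphaMax P u k a := by
  obtain ⟨_, ⟨k', ⟨-, hk'⟩, rfl⟩, hk'k⟩ := sInf_lt_iff.1 hkK
  obtain ⟨α, hα0, hα1, hge⟩ := hk' a ha
  have hmem : α ∈ Cset P u k a := ⟨hα0.le, hα1.le,
    dyadicGE_mono hP hLaw hMono (EReal.coe_lt_coe_iff.1 hk'k).le le_rfl hα0.le hα1.le hge⟩
  exact hα0.trans_le (le_csSup bddAbove_Cset hmem)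

theorem alphaMax_lt_one (hP : IsAtomless P) (hTI : IsTranslationInvariant P u)
    (hNorm : u (fun _ => 0) = 0) (hMono : IsMonotone P u) (hLaw : IsLawInvariant P u)
    (hFatou : HasFatouProperty P u) (hk : k < 0) (ha : 0 ≤ a) : alphaMax P u k a < 1 := by
  have hmax : alphaMax P u k a ∈ Cset P u k a :=
    alphaMax_mem_Cset hP hTI hNorm hMono hLaw hFatou ha
  exact hmax.2.1.lt_of_ne fun h => one_notMem_Cset hTI hNorm hLaw hk (h ▸ hmax)

theorem apply_eq_zero_of_hasDyadicLaw_alphaMax (hP : IsAtomless P)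
    (hTI : IsTranslationInvariant P u) (hNorm : u (fun _ => 0) = 0) (hMono : IsMonotone P u)
    (hLaw : IsLawInvariant P u) (hConc : IsConcave P u) (hFatou : HasFatouProperty P u)
    (hCxLS : CxLS P u) (hkK : Kdef P u < k) (hk : k < 0) (ha : 0 < a) {ξ : Ω → ℝ}
    (hξ : BddMeas P ξ) (hlaw : HasDyadicLaw P ξ k a (alphaMax P u k a)) : u ξ = 0 := by
  have hmax : alphaMax P u k a ∈ Cset P u k a :=
    alphaMax_mem_Cset hP hTI hNorm hMono hLaw hFatou ha.le
  have hpos := alphaMax_pos hP hLaw hMono hkK ha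
  obtain ⟨U, hU, hPU⟩ := hP.exists_measure_eq hmax.2.1
  rw [hLaw _ _ hξ (bddMeas_twoPoint P hU) (hlaw.trans (hasDyadicLaw_twoPoint hU hPU hmax.1).symm)]
  refine le_antisymm (not_lt.1 fun hc => ?_) ((hLaw.dyadicGE_iff hU hPU hmax.1).1 hmax.2.2)
  obtain ⟨α, hmα, hα1, hα⟩ := exists_dyadicGE_gt_of_pos hP hTI hNorm hMono hConc hCxLS hU hPU
    hpos (alphaMax_lt_one hP hTI hNorm hMono hLaw hFatou hk ha.le) hc
  exact hmα.not_ge (le_csSup bddAbove_Cset ⟨hpos.le.trans hmα.le, hα1, hα⟩)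

theorem alphaMax_mono (hP : IsAtomless P) (hTI : IsTranslationInvariant P u)
    (hNorm : u (fun _ => 0) = 0) (hMono : IsMonotone P u) (hLaw : IsLawInvariant P u)
    {k' a' : ℝ} (hk : k ≤ k') (ha : a ≤ a') (ha0 : 0 ≤ a) :
    alphaMax P u k a ≤ alphaMax P u k' a' :=
  csSup_le_csSup bddAbove_Cset ⟨0, zero_mem_Cset hTI hNorm ha0⟩ fun _ hα =>
    ⟨hα.1, hα.2.1, dyadicGE_mono hP hLaw hMono hk ha hα.1 hα.2.1 hα.2.2⟩

end DyadicLevels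

theorem stmt_10_general {Ω : Type} [MeasurableSpace Ω] (P : Measure Ω) [IsProbabilityMeasure P]
    (u : (Ω → ℝ) → ℝ)
    (hAtomless : ∀ A : Set Ω, MeasurableSet A → 0 < P A →
      ∃ B : Set Ω, B ⊆ A ∧ MeasurableSet B ∧ 0 < P B ∧ P B < P A)
    (hTI : ∀ ξ : Ω → ℝ, BddMeas P ξ → ∀ h : ℝ, u (fun ω => ξ ω + h) = u ξ + h)
    (hMono : ∀ ξ η : Ω → ℝ, BddMeas P ξ → BddMeas P η → (∀ᵐ ω ∂P, ξ ω ≤ η ω) → u ξ ≤ u η)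
    (hNorm : u (fun _ => 0) = 0)
    (hLaw : ∀ ξ η : Ω → ℝ, BddMeas P ξ → BddMeas P η → P.map ξ = P.map η → u ξ = u η)
    (hConc : ∀ ξ η : Ω → ℝ, BddMeas P ξ → BddMeas P η → ∀ l : ℝ, 0 ≤ l → l ≤ 1 →
      l * u ξ + (1 - l) * u η ≤ u (fun ω => l * ξ ω + (1 - l) * η ω))
    (hFatou : ∀ (ξs : ℕ → Ω → ℝ) (ξ : Ω → ℝ), (∀ n, BddMeas P (ξs n)) → BddMeas P ξ →
      (∃ C : ℝ, ∀ n, ∀ᵐ ω ∂P, |ξs n ω| ≤ C) →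
      TendstoInMeasure P ξs Filter.atTop ξ →
      Filter.limsup (fun n => u (ξs n)) Filter.atTop ≤ u ξ)
    (hCxLS : CxLS P u)
    (k a : ℝ) (hkK : Kdef P u < (k : EReal)) (hk : k < 0) (ha : 0 < a) :
    IsClosed (Cset P u k a) ∧ (Cset P u k a).OrdConnected ∧ (0 : ℝ) ∈ Cset P u k a ∧
      IsGreatest (Cset P u k a) (alphaMax P u k a) ∧
      0 < alphaMax P u k a ∧ alphaMax P u k a < 1 ∧
      (∀ ξ : Ω → ℝ, BddMeas P ξ → HasDyadicLaw P ξ k a (alphaMax P u k a) → u ξ = 0) ∧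
      (∀ k' a' : ℝ, Kdef P u < (k' : EReal) → k' < 0 → 0 < a' → k ≤ k' → a ≤ a' →
        alphaMax P u k a ≤ alphaMax P u k' a') := by
  have hC : Cset P u k a = Icc 0 (alphaMax P u k a) :=
    Cset_eq_Icc hAtomless hTI hNorm hMono hLaw hFatou (hk.trans ha).le ha.le
  have hpos := alphaMax_pos hAtomless hLaw hMono hkK ha
  refine ⟨hC ▸ isClosed_Icc, hC ▸ ordConnected_Icc, zero_mem_Cset hTI hNorm ha.le,
    hC ▸ isGreatest_Icc hpos.le, hpos,
    alphaMax_lt_one hAtomless hTI hNorm hMono hLaw hFatou hk ha.le, fun ξ hξ hlaw => ?_,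
    fun k' a' _ _ _ hkk' haa' => ?_⟩
  · exact apply_eq_zero_of_hasDyadicLaw_alphaMax hAtomless hTI hNorm hMono hLaw hConc hFatou
      hCxLS hkK hk ha hξ hlaw
  · exact alphaMax_mono hAtomless hTI hNorm hMono hLaw hkk' haa' ha.le

theorem stmt_10 {Ω : Type} [MeasurableSpace Ω] (P : Measure Ω) [IsProbabilityMeasure P]
    (u : (Ω → ℝ) → ℝ)
    (hAtomless : ∀ A : Set Ω, MeasurableSet A → 0 < P A →
      ∃ B : Set Ω, B ⊆ A ∧ MeasurableSet B ∧ 0 < P B ∧ P B < P A)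
    (hTI : ∀ ξ : Ω → ℝ, BddMeas P ξ → ∀ h : ℝ, u (fun ω => ξ ω + h) = u ξ + h)
    (hMono : ∀ ξ η : Ω → ℝ, BddMeas P ξ → BddMeas P η → (∀ᵐ ω ∂P, ξ ω ≤ η ω) → u ξ ≤ u η)
    (hNorm : u (fun _ => 0) = 0)
    (hLaw : ∀ ξ η : Ω → ℝ, BddMeas P ξ → BddMeas P η → P.map ξ = P.map η → u ξ = u η)
    (hConc : ∀ ξ η : Ω → ℝ, BddMeas P ξ → BddMeas P η → ∀ l : ℝ, 0 ≤ l → l ≤ 1 →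
      l * u ξ + (1 - l) * u η ≤ u (fun ω => l * ξ ω + (1 - l) * η ω))
    (hFatou : ∀ (ξs : ℕ → Ω → ℝ) (ξ : Ω → ℝ), (∀ n, BddMeas P (ξs n)) → BddMeas P ξ →
      (∃ C : ℝ, ∀ n, ∀ᵐ ω ∂P, |ξs n ω| ≤ C) →
      TendstoInMeasure P ξs Filter.atTop ξ →
      Filter.limsup (fun n => u (ξs n)) Filter.atTop ≤ u ξ)
    (hCxLS : CxLS P u)
    (hNotEssInf : ∃ ξ : Ω → ℝ, BddMeas P ξ ∧ u ξ ≠ essInfR P ξ)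
    (k a : ℝ) (hkK : Kdef P u < (k : EReal)) (hk : k < 0) (ha : 0 < a) :
    IsClosed (Cset P u k a) ∧ (Cset P u k a).OrdConnected ∧ (0 : ℝ) ∈ Cset P u k a ∧
      IsGreatest (Cset P u k a) (alphaMax P u k a) ∧
      0 < alphaMax P u k a ∧ alphaMax P u k a < 1 ∧
      (∀ ξ : Ω → ℝ, BddMeas P ξ → HasDyadicLaw P ξ k a (alphaMax P u k a) → u ξ = 0) ∧
      (∀ k' a' : ℝ, Kdef P u < (k' : EReal) → k' < 0 → 0 < a' → k ≤ k' → a ≤ a' →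
        alphaMax P u k a ≤ alphaMax P u k' a') :=
  stmt_10_general P u hAtomless hTI hMono hNorm hLaw hConc hFatou hCxLS k a hkK hk ha
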